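/- arXiv:1611.04907 — 2 statements merged into one kernel-verified Lean document; each statement's English description precedes it below -/
import Mathlib

section
/- Let q ≥ 1. The invertible region D_θ is an open subset of ℝ^q. -/
/-- Forward recursion for the Barndorff-Nielsen–Schou / Monahan transformation:
`fwdRow ζ k i = θ_{i,k}` (1-based), with `θ_{k,k} = ζ_k` and
`θ_{i,k} = θ_{i,k-1} - ζ_k * θ_{k-i,k-1}` for `1 ≤ i ≤ k-1`. -/
noncomputable def fwdRow (ζ : ℕ → ℝ) : ℕ → ℕ → ℝ
  | 0 => fun _ => 0
  | (k+1) => fun i =>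
      if i = k + 1 then ζ (k + 1)
      else fwdRow ζ k i - ζ (k + 1) * fwdRow ζ k (k + 1 - i)

open Classical in
/-- Reverse recursion: `(invAux q θ d).1` is row `q - d` (i.e. `θ_{·, q-d}`), and
`(invAux q θ d).2` is the proposition that `|θ_{j,j}| < 1` for all `j` with `q - d ≤ j ≤ q`.
Row `q-(d+1)` is given by `θ_{i,k-1} = (θ_{i,k} + θ_{k,k} θ_{k-i,k})/(1-θ_{k,k}^2)` with
`k = q - d` when the diagonal condition holds at all levels `≥ k`, and is `0` otherwise. -/
noncomputable def invAux (q : ℕ) (θ : ℕ → ℝ) : ℕ → (ℕ → ℝ) × Prop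
  | 0 => (θ, |θ q| < 1)
  | (d+1) =>
      let p := invAux q θ d
      let row : ℕ → ℝ := fun i =>
        if p.2 then (p.1 i + p.1 (q - d) * p.1 (q - d - i)) / (1 - (p.1 (q - d)) ^ 2)
        else 0
      (row, p.2 ∧ |row (q - d - 1)| < 1)

/-- Interpret a vector in `ℝ^q` as a 1-based sequence `ℕ → ℝ` (value `0` out of range). -/
def toSeq {q : ℕ} (v : Fin q → ℝ) : ℕ → ℝ :=
  fun n => if h : n - 1 < q then v ⟨n - 1, h⟩ else 0

/-- The map `B : ℝ^q → ℝ^q`, `B(ζ)_i = θ_{i,q}`. -/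
noncomputable def Bmap {q : ℕ} (ζ : Fin q → ℝ) : Fin q → ℝ :=
  fun i => fwdRow (toSeq ζ) q (i.1 + 1)

/-- The map `B⁻ : ℝ^q → ℝ^q`, `B⁻(θ)_i = θ_{i,i}` computed by the reverse recursion. -/
noncomputable def Binv {q : ℕ} (θ : Fin q → ℝ) : Fin q → ℝ :=
  fun i => (invAux q (toSeq θ) (q - (i.1 + 1))).1 (i.1 + 1)

/-- The invertible region `D_θ ⊆ ℝ^q`: all complex roots of
`θ(z) = 1 - θ_1 z - ⋯ - θ_q z^q` satisfy `|z| > 1`. -/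
def invRegion (q : ℕ) : Set (Fin q → ℝ) :=
  {θ | ∀ z : ℂ, 1 - ∑ i : Fin q, (θ i : ℂ) * z ^ (i.1 + 1) = 0 → 1 < ‖z‖}

/-- The open unit cube `D_ζ = (-1,1)^q ⊆ ℝ^q`. -/
def openCube (q : ℕ) : Set (Fin q → ℝ) :=
  {ζ | ∀ i, ζ i ∈ Set.Ioo (-1 : ℝ) 1}

theorem isOpen_setOf_forall_mem_ne {X Y Z : Type*} [TopologicalSpace X] [TopologicalSpace Y]
    [TopologicalSpace Z] [T1Space Z] {f : X × Y → Z} (hf : Continuous f) {K : Set Y}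
    (hK : IsCompact K) (c : Z) :
    IsOpen {x | ∀ y ∈ K, f (x, y) ≠ c} :=
  isOpen_iff_mem_nhds.mpr fun _ hx =>
    hK.eventually_forall_of_forall_eventually fun y hy =>
      hf.continuousAt.eventually_ne (hx y hy)

def maPoly {q : ℕ} (θ : Fin q → ℝ) (z : ℂ) : ℂ :=
  1 - ∑ i : Fin q, (θ i : ℂ) * z ^ (i.1 + 1)

theorem continuous_maPoly (q : ℕ) :
    Continuous fun p : (Fin q → ℝ) × ℂ => maPoly p.1 p.2 := by
  unfold maPoly
  fun_prop

theorem invRegion_eq_setOf_forall_mem_closedBall (q : ℕ) :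
    invRegion q = {θ | ∀ z ∈ Metric.closedBall (0 : ℂ) 1, maPoly θ z ≠ 0} := by
  ext θ
  simp only [invRegion, maPoly, Set.mem_ofPred_eq, Metric.mem_closedBall, dist_zero_right]
  exact forall_congr' fun z => by rw [← not_le]; exact imp_not_comm

theorem invRegion_isOpen_general {q : ℕ} :
    IsOpen (invRegion q) := by
  rw [invRegion_eq_setOf_forall_mem_closedBall]
  exact isOpen_setOf_forall_mem_ne (continuous_maPoly q) (isCompact_closedBall 0 1) 0

/-- For `q ≥ 1`, the invertible region `D_θ` is an open subset of `ℝ^q`. -/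
theorem invRegion_isOpen {q : ℕ} (hq : 1 ≤ q) :
    IsOpen (invRegion q) :=
  invRegion_isOpen_general
end

section
/- Let q ≥ 1 and let ζ = (ζ_1,…,ζ_q) ∈ (−1,1)^q. Then B⁻(B(ζ)) = ζ; that is, the inverse recursion recovers ζ from θ = B(ζ) whenever all |ζ_k| < 1. -/
/-!
Both recursions act row by row: the forward step sends `(θ_{i,k-1}, θ_{k-i,k-1})` to
`(θ_{i,k}, θ_{k-i,k}) = (θ_{i,k-1} - ζ_k θ_{k-i,k-1}, θ_{k-i,k-1} - ζ_k θ_{i,k-1})`, a linear map of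
determinant `1 - ζ_k²`, and the reverse step is its inverse. Since `θ_{k,k} = ζ_k`, the reverse
recursion started from `B(ζ)` reproduces every row of the forward recursion, and the guard
`|θ_{j,j}| < 1` holds throughout because `ζ ∈ (-1,1)^q`.
-/

lemma fwdRow_succ_self (ζ : ℕ → ℝ) (k : ℕ) : fwdRow ζ (k + 1) (k + 1) = ζ (k + 1) := by
  simp [fwdRow]

lemma fwdRow_succ_of_ne (ζ : ℕ → ℝ) {k i : ℕ} (h : i ≠ k + 1) :
    fwdRow ζ (k + 1) i = fwdRow ζ k i - ζ (k + 1) * fwdRow ζ k (k + 1 - i) := by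
  simp [fwdRow, h]

lemma fwdRow_succ_inverse (ζ : ℕ → ℝ) {k i : ℕ} (hζ : 1 - ζ (k + 1) ^ 2 ≠ 0)
    (hi₁ : 1 ≤ i) (hik : i ≤ k) :
    (fwdRow ζ (k + 1) i + ζ (k + 1) * fwdRow ζ (k + 1) (k + 1 - i)) / (1 - ζ (k + 1) ^ 2) =
      fwdRow ζ k i := by
  have hmirror : fwdRow ζ (k + 1) (k + 1 - i) =
      fwdRow ζ k (k + 1 - i) - ζ (k + 1) * fwdRow ζ k i := by
    rw [fwdRow_succ_of_ne ζ (by omega), Nat.sub_sub_self (by omega)]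
  rw [fwdRow_succ_of_ne ζ (by omega), hmirror, div_eq_iff hζ]
  ring

lemma invAux_succ_fst {q : ℕ} {θ : ℕ → ℝ} {d : ℕ} (h : (invAux q θ d).2) (i : ℕ) :
    (invAux q θ (d + 1)).1 i =
      ((invAux q θ d).1 i + (invAux q θ d).1 (q - d) * (invAux q θ d).1 (q - d - i)) /
        (1 - (invAux q θ d).1 (q - d) ^ 2) := by
  simp only [invAux, if_pos h]

lemma invAux_succ_snd_iff {q : ℕ} {θ : ℕ → ℝ} {d : ℕ} :
    (invAux q θ (d + 1)).2 ↔ (invAux q θ d).2 ∧ |(invAux q θ (d + 1)).1 (q - d - 1)| < 1 :=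
  Iff.rfl

lemma invAux_fwdRow {q : ℕ} {ζ θ : ℕ → ℝ} (hζ : ∀ j, 1 ≤ j → j ≤ q → |ζ j| < 1)
    (hθ : ∀ i, 1 ≤ i → i ≤ q → θ i = fwdRow ζ q i) {d : ℕ} (hd : d < q) :
    (invAux q θ d).2 ∧ ∀ i, 1 ≤ i → i ≤ q - d → (invAux q θ d).1 i = fwdRow ζ (q - d) i := by
  induction d with
  | zero =>
    obtain ⟨k, rfl⟩ : ∃ k, q = k + 1 := ⟨q - 1, by omega⟩
    refine ⟨?_, fun i hi₁ hiq => hθ i hi₁ hiq⟩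
    change |θ (k + 1)| < 1
    rw [hθ _ (by omega) le_rfl, fwdRow_succ_self]
    exact hζ _ (by omega) le_rfl
  | succ d ih =>
    obtain ⟨hguard, hrow⟩ := ih (by omega)
    obtain ⟨k, hk⟩ : ∃ k, q - d = k + 2 := ⟨q - d - 2, by omega⟩
    have hpivot : (invAux q θ d).1 (q - d) = ζ (k + 2) := by
      rw [hrow _ (by omega) le_rfl, hk, fwdRow_succ_self]
    have hζk : |ζ (k + 2)| < 1 := hk ▸ hζ _ (by omega) (by omega)
    have hdet : 1 - ζ (k + 2) ^ 2 ≠ 0 := by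
      have := sq_lt_one_iff_abs_lt_one _ |>.mpr hζk
      linarith
    have hrow' : ∀ i, 1 ≤ i → i ≤ q - (d + 1) →
        (invAux q θ (d + 1)).1 i = fwdRow ζ (q - (d + 1)) i := by
      intro i hi₁ hi
      rw [invAux_succ_fst hguard, hpivot, hrow i hi₁ (by omega), hrow _ (by omega) (by omega),
        hk, show q - (d + 1) = k + 1 by omega]
      exact fwdRow_succ_inverse ζ hdet hi₁ (by omega)
    refine ⟨invAux_succ_snd_iff.mpr ⟨hguard, ?_⟩, hrow'⟩
    rw [hrow' _ (by omega) (by omega), show q - (d + 1) = k + 1 by omega,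
      show q - d - 1 = k + 1 by omega, fwdRow_succ_self]
    exact hζ _ (by omega) (by omega)

lemma toSeq_apply_of_le {q : ℕ} (v : Fin q → ℝ) {i : ℕ} (hi₁ : 1 ≤ i) (hiq : i ≤ q) :
    toSeq v i = v ⟨i - 1, by omega⟩ :=
  dif_pos _

lemma toSeq_succ {q : ℕ} (v : Fin q → ℝ) (i : Fin q) : toSeq v (i.1 + 1) = v i :=
  dif_pos (by simp)

lemma toSeq_Bmap {q : ℕ} (ζ : Fin q → ℝ) {i : ℕ} (hi₁ : 1 ≤ i) (hiq : i ≤ q) :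
    toSeq (Bmap ζ) i = fwdRow (toSeq ζ) q i := by
  rw [toSeq_apply_of_le _ hi₁ hiq, Bmap, Nat.sub_add_cancel hi₁]

theorem Binv_Bmap_general {q : ℕ} (ζ : Fin q → ℝ)
    (hζ : ∀ i, ζ i ∈ Set.Ioo (-1 : ℝ) 1) :
    Binv (Bmap ζ) = ζ := by
  funext i
  have hζ' : ∀ j, 1 ≤ j → j ≤ q → |toSeq ζ j| < 1 := fun j hj₁ hjq => by
    rw [toSeq_apply_of_le ζ hj₁ hjq]
    exact abs_lt.mpr (hζ _)
  have hrow := (invAux_fwdRow hζ' (fun _ => toSeq_Bmap ζ) (d := q - (i.1 + 1)) (by omega)).2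
  rw [Binv, hrow _ (by omega) (by omega), Nat.sub_sub_self i.2, fwdRow_succ_self, toSeq_succ]

/-- For `q ≥ 1` and `ζ ∈ (-1,1)^q`, the inverse recursion recovers `ζ` from `B(ζ)`:
`B⁻(B(ζ)) = ζ`. -/
theorem Binv_Bmap {q : ℕ} (hq : 1 ≤ q) (ζ : Fin q → ℝ)
    (hζ : ∀ i, ζ i ∈ Set.Ioo (-1 : ℝ) 1) :
    Binv (Bmap ζ) = ζ :=
  Binv_Bmap_general ζ hζ
end
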